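/- For every ε with 0 < ε < 1/3, there do not exist pairwise disjoint subsets A₁, A₂, A₃ of M₁ together with points u_i, v_i ∈ A_i with u_i ≠ v_i (i = 1,2,3) such that (1−ε)(d(x,y) + d(u_i,v_i)) ≤ d(x,u_i) + d(y,v_i) for all x, y ∈ M₁ ∖ A_i and every i ∈ {1,2,3}. In particular, M₁ does not have the sequential long trapezoid property (seq-LTP). -/
import Mathlib



/-- Build a metric space from a distance function which vanishes on the diagonal and takes
values in `[1,2]` off the diagonal (the triangle inequality is then automatic). -/
noncomputable def MetricSpace.ofOneTwo {α : Type*} (D : α → α → ℝ)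
    (hself : ∀ x, D x x = 0) (hsymm : ∀ x y, D x y = D y x)
    (hlow : ∀ x y, x ≠ y → 1 ≤ D x y) (hhigh : ∀ x y, D x y ≤ 2) : MetricSpace α :=
  { dist := D
    dist_self := hself
    dist_comm := hsymm
    dist_triangle := by
      intro x y z
      show D x z ≤ D x y + D y z
      rcases eq_or_ne x y with rfl | hxy
      · simp [hself]
      rcases eq_or_ne y z with rfl | hyz
      · simp [hself]
      have h1 := hlow x y hxy
      have h2 := hlow y z hyz
      have h3 := hhigh x z
      linarith
    eq_of_dist_eq_zero := by
      intro x y hxy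
      replace hxy : D x y = 0 := hxy
      by_contra h
      have := hlow x y h
      linarith }

/-- The points of the metric space `M₁`. -/
inductive M1 where
  | a : ℕ → M1
  | b : ℕ → M1
  | c : ℕ → M1
deriving DecidableEq

namespace M1

/-- The index `k` of a point `a k`, `b k`, or `c k`. -/
def idx : M1 → ℕ
  | .a k => k
  | .b k => k
  | .c k => k

/-- Whether a point of `M₁` is of the form `b k`. -/
def isB : M1 → Prop
  | .b _ => True
  | _ => False

/-- One-sided description of the pairs of points of `M₁` at distance `2`:
`d(a_k, c_k) = 2`, and `d(x, b_l) = 2` whenever `x ∈ {a_k, b_k, c_k}` with `k < l`. -/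
def two : M1 → M1 → Prop := fun p q =>
  (∃ k, p = .a k ∧ q = .c k) ∨ (q.isB ∧ p.idx < q.idx)

/-- The distance on `M₁`: `0` on the diagonal, `2` on the pairs described by `M1.two`
(in either order), and `1` otherwise. -/
noncomputable def D (p q : M1) : ℝ :=
  open scoped Classical in
  if p = q then 0 else if two p q ∨ two q p then 2 else 1

noncomputable instance : MetricSpace M1 :=
  MetricSpace.ofOneTwo D
    (fun x => by simp [D])
    (fun x y => by
      rcases eq_or_ne x y with rfl | h
      · rfl
      · rw [D, D, if_neg h, if_neg (Ne.symm h)]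
        rcases em (two x y ∨ two y x) with h2 | h2
        · rw [if_pos h2, if_pos h2.symm]
        · rw [if_neg h2, if_neg fun hc => h2 hc.symm])
    (fun x y h => by rw [D, if_neg h]; split_ifs <;> norm_num)
    (fun x y => by rw [D]; split_ifs <;> norm_num)

lemma dist_a_small {k : ℕ} {q : M1} (h : q.idx < k) : dist (M1.a k) q = 1 := by
  have hne : M1.a k ≠ q := by rintro rfl; simp [idx] at h
  show D (M1.a k) q = 1
  rw [D, if_neg hne, if_neg]
  rintro ((⟨m, hm1, hm2⟩ | ⟨hb, hlt⟩) | (⟨m, hm1, hm2⟩ | ⟨hb, hlt⟩))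
  · injection hm1 with h'
    subst h'; subst hm2
    simp [idx] at h
  · exact absurd hlt (not_lt.2 h.le)
  · exact M1.noConfusion hm2
  · exact hb

lemma dist_c_small {k : ℕ} {q : M1} (h : q.idx < k) : dist (M1.c k) q = 1 := by
  have hne : M1.c k ≠ q := by rintro rfl; simp [idx] at h
  show D (M1.c k) q = 1
  rw [D, if_neg hne, if_neg]
  rintro ((⟨m, hm1, hm2⟩ | ⟨hb, hlt⟩) | (⟨m, hm1, hm2⟩ | ⟨hb, hlt⟩))
  · exact M1.noConfusion hm1
  · exact absurd hlt (not_lt.2 h.le)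
  · injection hm2 with h'
    subst h'; subst hm1
    simp [idx] at h
  · exact hb

lemma dist_a_c (k : ℕ) : dist (M1.a k) (M1.c k) = 2 := by
  show D (M1.a k) (M1.c k) = 2
  rw [D, if_neg (by simp), if_pos (show M1.two (M1.a k) (M1.c k) ∨ M1.two (M1.c k) (M1.a k) from Or.inl (Or.inl ⟨k, rfl, rfl⟩))]

lemma one_le_dist {p q : M1} (h : p ≠ q) : 1 ≤ dist p q := by
  show (1 : ℝ) ≤ D p q
  rw [D, if_neg h]
  split_ifs <;> norm_num

end M1

/-- A metric space `M` has the *sequential long trapezoid property* (seq-LTP). -/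
def SeqLTP (M : Type*) [MetricSpace M] : Prop :=
  ∀ ε : ℝ, 0 < ε → ∃ A : ℕ → Set M,
    (Pairwise fun m k => Disjoint (A m) (A k)) ∧
    ∀ m : ℕ, ∃ u ∈ A m, ∃ v ∈ A m, u ≠ v ∧
      ∀ x ∉ A m, ∀ y ∉ A m,
        (1 - ε) * (dist x y + dist u v) ≤ dist x u + dist y v

/-- For `0 < ε < 1/3` there are no three pairwise disjoint subsets `A₁, A₂, A₃` of `M₁`
with points `uᵢ ≠ vᵢ` in `Aᵢ` satisfying the long trapezoid inequality outside `Aᵢ`;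
in particular, `M₁` does not have the seq-LTP. -/
theorem M1_not_seqLTP :
    (∀ ε : ℝ, 0 < ε → ε < 1 / 3 →
      ¬ ∃ (A : Fin 3 → Set M1) (u v : Fin 3 → M1),
        (Pairwise fun i j => Disjoint (A i) (A j)) ∧
        ∀ i : Fin 3, u i ∈ A i ∧ v i ∈ A i ∧ u i ≠ v i ∧
          ∀ x ∉ A i, ∀ y ∉ A i,
            (1 - ε) * (dist x y + dist (u i) (v i)) ≤ dist x (u i) + dist y (v i)) ∧
    ¬ SeqLTP M1 := by
  have main : ∀ ε : ℝ, 0 < ε → ε < 1 / 3 →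
      ¬ ∃ (A : Fin 3 → Set M1) (u v : Fin 3 → M1),
        (Pairwise fun i j => Disjoint (A i) (A j)) ∧
        ∀ i : Fin 3, u i ∈ A i ∧ v i ∈ A i ∧ u i ≠ v i ∧
          ∀ x ∉ A i, ∀ y ∉ A i,
            (1 - ε) * (dist x y + dist (u i) (v i)) ≤ dist x (u i) + dist y (v i) := by
    intro ε hε hε3
    rintro ⟨A, u, v, hdisj, hi⟩
    set N : ℕ := (Finset.univ.sup fun i : Fin 3 => max (u i).idx (v i).idx) + 1 with hNdef
    have hN : ∀ i : Fin 3, (u i).idx < N ∧ (v i).idx < N := by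
      intro i
      have := Finset.le_sup (f := fun i : Fin 3 => max (u i).idx (v i).idx)
        (Finset.mem_univ i)
      rw [hNdef]
      exact ⟨Nat.lt_succ_of_le (le_trans (le_max_left _ _) this),
        Nat.lt_succ_of_le (le_trans (le_max_right _ _) this)⟩
    have hkey : ∀ i : Fin 3, M1.a N ∈ A i ∨ M1.c N ∈ A i := by
      intro i
      by_contra h
      push_neg at h
      obtain ⟨hu, hv, huv, hineq⟩ := hi i
      have hineq' := hineq (M1.a N) h.1 (M1.c N) h.2
      rw [M1.dist_a_small (hN i).1, M1.dist_c_small (hN i).2, M1.dist_a_c] at hineq'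
      have h1 := M1.one_le_dist huv
      nlinarith [h1, hineq']
    rcases hkey 0 with h0 | h0 <;> rcases hkey 1 with h1 | h1 <;>
      rcases hkey 2 with h2 | h2 <;>
      first
        | exact (Set.disjoint_left.1 (hdisj (show (0 : Fin 3) ≠ 1 by decide)) h0) h1
        | exact (Set.disjoint_left.1 (hdisj (show (0 : Fin 3) ≠ 2 by decide)) h0) h2
        | exact (Set.disjoint_left.1 (hdisj (show (1 : Fin 3) ≠ 2 by decide)) h1) h2
  refine ⟨main, fun hs => ?_⟩
  obtain ⟨A, hdisj, hA⟩ := hs (1 / 4) (by norm_num)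
  choose u hu v hv huv hineq using hA
  exact main (1 / 4) (by norm_num) (by norm_num)
    ⟨fun i => A i, fun i => u i, fun i => v i,
      fun i j hij => hdisj (fun h => hij (Fin.ext h)),
      fun i => ⟨hu i, hv i, huv i, hineq i⟩⟩
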